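/- arXiv:1711.09584 — 2 statements merged into one kernel-verified Lean document; each statement's English description precedes it below -/
import Mathlib

section
/- Let n ≥ 1 and let U be a symmetric n×n real matrix. Define V = U − (1/n) U 1 1ᵀ − (1/n) 1 1ᵀ U + (1/n²) 1 1ᵀ U 1 1ᵀ. Then V satisfies V·1 = 0 and V = Vᵀ, and for every n×n real matrix V' with V'·1 = 0 and V' = V'ᵀ one has ‖V − U‖_F ≤ ‖V' − U‖_F; that is, V is the Frobenius-norm projection of U onto the subspace {V : V 1 = 0, V = Vᵀ}. -/
open Matrix BigOperators

/-- The Frobenius norm of a real square matrix. -/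
noncomputable def frobNorm {n : ℕ} (M : Matrix (Fin n) (Fin n) ℝ) : ℝ :=
  Real.sqrt (∑ i, ∑ j, (M i j) ^ 2)

/-- Closed-form solution (Eq. 11): V = U − (1/n)UJ − (1/n)JU + (1/n²)JUJ is the
Frobenius projection of a symmetric U onto {V : V1 = 0, V = Vᵀ}. -/
theorem stmt_8 (n : ℕ) (hn : 1 ≤ n) (U : Matrix (Fin n) (Fin n) ℝ) (hU : U = Uᵀ)
    (J : Matrix (Fin n) (Fin n) ℝ) (hJ : ∀ i j, J i j = 1)
    (V : Matrix (Fin n) (Fin n) ℝ)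
    (hV : V = U - (1 / (n : ℝ)) • (U * J) - (1 / (n : ℝ)) • (J * U)
      + (1 / ((n : ℝ) ^ 2)) • (J * U * J)) :
    V.mulVec 1 = 0 ∧ V = Vᵀ ∧
      ∀ V' : Matrix (Fin n) (Fin n) ℝ, V'.mulVec 1 = 0 → V' = V'ᵀ →
        frobNorm (V - U) ≤ frobNorm (V' - U) := by
  have hn0 : (0 : ℝ) < (n : ℝ) := by exact_mod_cast Nat.lt_of_lt_of_le Nat.zero_lt_one hn
  have hne : (n : ℝ) ≠ 0 := ne_of_gt hn0
  set S : ℝ := ∑ k, ∑ l, U k l with hS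
  have hUsym : ∀ i j, U i j = U j i := by
    intro i j; exact congrFun (congrFun hU i) j
  have hVe : ∀ i j, V i j = U i j - (1/(n:ℝ)) * (∑ k, U i k)
      - (1/(n:ℝ)) * (∑ k, U k j) + (1/((n:ℝ)^2)) * S := by
    intro i j
    have h1 : (U * J) i j = ∑ k, U i k := by
      simp [Matrix.mul_apply, hJ]
    have h2 : (J * U) i j = ∑ k, U k j := by
      simp [Matrix.mul_apply, hJ]
    have h3 : (J * U * J) i j = S := by
      simp only [Matrix.mul_apply, hJ, mul_one]
      rw [hS, Finset.sum_comm]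
      congr 1; ext l
      simp [Matrix.mul_apply, hJ]
    simp [hV, h1, h2, h3]
  -- row sums of V are zero
  have hrow : ∀ i, ∑ j, V i j = 0 := by
    intro i
    have hstep : ∑ j, V i j = (∑ j, U i j) - (n:ℝ) * ((1/(n:ℝ)) * (∑ k, U i k))
        - (1/(n:ℝ)) * (∑ j, ∑ k, U k j) + (n:ℝ) * ((1/((n:ℝ)^2)) * S) := by
      simp only [hVe]
      rw [Finset.sum_add_distrib, Finset.sum_sub_distrib, Finset.sum_sub_distrib,
        Finset.sum_const, Finset.card_univ, Fintype.card_fin, ← Finset.mul_sum,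
        Finset.sum_const, Finset.card_univ, Fintype.card_fin]
      simp only [nsmul_eq_mul]
    rw [hstep]
    have hsw : ∑ j, ∑ k, U k j = S := by rw [hS, Finset.sum_comm]
    rw [hsw]
    field_simp
    ring
  have hmul : V.mulVec 1 = 0 := by
    funext i
    simp [Matrix.mulVec, dotProduct, hrow i]
  have hsymV : V = Vᵀ := by
    ext i j
    rw [Matrix.transpose_apply, hVe, hVe, hUsym i j]
    have e1 : (∑ k, U i k) = ∑ k, U k i :=
      Finset.sum_congr rfl fun k _ => hUsym i k
    have e2 : (∑ k, U k j) = ∑ k, U j k :=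
      Finset.sum_congr rfl fun k _ => hUsym k j
    rw [e1, e2]; ring
  refine ⟨hmul, hsymV, ?_⟩
  intro V' hV'1 hV'sym
  set W : Matrix (Fin n) (Fin n) ℝ := V' - V with hW
  have hWrow : ∀ i, ∑ j, W i j = 0 := by
    intro i
    have h1 : ∑ j, V' i j = 0 := by
      have := congrFun hV'1 i
      simpa [Matrix.mulVec, dotProduct] using this
    simp [hW, Finset.sum_sub_distrib, h1, hrow i]
  have hWsym : ∀ i k, W i k = W k i := by
    intro i k
    have h1 : V' i k = V' k i := congrFun (congrFun hV'sym i) k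
    have h2 : V i k = V k i := congrFun (congrFun hsymV i) k
    simp [hW, h1, h2]
  have hWcol : ∀ j, ∑ i, W i j = 0 := by
    intro j
    rw [Finset.sum_congr rfl fun i _ => hWsym i j]
    exact hWrow j
  -- orthogonality: ⟨V - U, W⟩ = 0
  have hcross : ∑ i, ∑ j, (V i j - U i j) * W i j = 0 := by
    have hdiff : ∀ i j, V i j - U i j
        = (-(1/(n:ℝ)) * (∑ k, U i k)) + (-(1/(n:ℝ)) * (∑ k, U k j))
          + (1/((n:ℝ)^2)) * S := by
      intro i j; rw [hVe]; ring
    have hT1 : ∑ i, ∑ j, (-(1/(n:ℝ)) * (∑ k, U i k)) * W i j = 0 := by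
      refine Finset.sum_eq_zero fun i _ => ?_
      rw [← Finset.mul_sum, hWrow i, mul_zero]
    have hT2 : ∑ i, ∑ j, (-(1/(n:ℝ)) * (∑ k, U k j)) * W i j = 0 := by
      rw [Finset.sum_comm]
      refine Finset.sum_eq_zero fun j _ => ?_
      rw [← Finset.mul_sum, hWcol j, mul_zero]
    have hT3 : ∑ i, ∑ j, ((1/((n:ℝ)^2)) * S) * W i j = 0 := by
      refine Finset.sum_eq_zero fun i _ => ?_
      rw [← Finset.mul_sum, hWrow i, mul_zero]
    calc ∑ i, ∑ j, (V i j - U i j) * W i j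
        = ∑ i, ∑ j, ((-(1/(n:ℝ)) * (∑ k, U i k)) * W i j
            + (-(1/(n:ℝ)) * (∑ k, U k j)) * W i j
            + ((1/((n:ℝ)^2)) * S) * W i j) := by
          refine Finset.sum_congr rfl fun i _ => Finset.sum_congr rfl fun j _ => ?_
          rw [hdiff]; ring
      _ = 0 := by
          simp only [Finset.sum_add_distrib]
          rw [hT1, hT2, hT3]; ring
  -- expand the squared norm
  have hsum : ∑ i, ∑ j, (V' i j - U i j) ^ 2
      = (∑ i, ∑ j, (V i j - U i j) ^ 2) + (∑ i, ∑ j, (W i j) ^ 2) := by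
    have expand : ∀ i j, (V' i j - U i j) ^ 2
        = (V i j - U i j) ^ 2 + 2 * ((V i j - U i j) * W i j) + (W i j) ^ 2 := by
      intro i j
      have : V' i j - U i j = (V i j - U i j) + W i j := by
        simp only [hW, Matrix.sub_apply]; ring
      rw [this]; ring
    calc ∑ i, ∑ j, (V' i j - U i j) ^ 2
        = ∑ i, ∑ j, ((V i j - U i j) ^ 2 + 2 * ((V i j - U i j) * W i j)
            + (W i j) ^ 2) := by
          exact Finset.sum_congr rfl fun i _ => Finset.sum_congr rfl fun j _ => expand i j
      _ = (∑ i, ∑ j, (V i j - U i j) ^ 2)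
          + 2 * (∑ i, ∑ j, (V i j - U i j) * W i j)
          + (∑ i, ∑ j, (W i j) ^ 2) := by
          simp only [Finset.sum_add_distrib, Finset.mul_sum]
      _ = _ := by rw [hcross]; ring
  have hle : ∑ i, ∑ j, ((V - U) i j) ^ 2 ≤ ∑ i, ∑ j, ((V' - U) i j) ^ 2 := by
    simp only [Matrix.sub_apply]
    rw [hsum]
    have : 0 ≤ ∑ i, ∑ j, (W i j) ^ 2 :=
      Finset.sum_nonneg fun i _ => Finset.sum_nonneg fun j _ => sq_nonneg _
    linarith
  exact Real.sqrt_le_sqrt hle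
end

section
/- Let n ≥ 1 and let X be any n×n real matrix. Define M = X + (1/n)(1 1ᵀ − X 1 1ᵀ − 1 1ᵀ X) + (1/n²) 1 1ᵀ X 1 1ᵀ. Then M·1 = 1 and Mᵀ·1 = 1, and for every n×n real matrix M' with M'·1 = 1 and M'ᵀ·1 = 1 one has ‖M − X‖_F ≤ ‖M' − X‖_F; that is, M is the Frobenius-norm projection of X onto the affine set of matrices whose rows and columns each sum to 1. -/
open Matrix BigOperators

/-- Affine projection step of Algorithm 1: M = X + (1/n)(J − XJ − JX) + (1/n²)JXJ is the
Frobenius projection of X onto the affine set of matrices with all row and column sums 1. -/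
theorem stmt_12 (n : ℕ) (hn : 1 ≤ n) (X : Matrix (Fin n) (Fin n) ℝ)
    (J : Matrix (Fin n) (Fin n) ℝ) (hJ : ∀ i j, J i j = 1)
    (M : Matrix (Fin n) (Fin n) ℝ)
    (hM : M = X + (1 / (n : ℝ)) • (J - X * J - J * X) + (1 / ((n : ℝ) ^ 2)) • (J * X * J)) :
    M.mulVec 1 = 1 ∧ Mᵀ.mulVec 1 = 1 ∧
      ∀ M' : Matrix (Fin n) (Fin n) ℝ, M'.mulVec 1 = 1 → M'ᵀ.mulVec 1 = 1 →
        frobNorm (M - X) ≤ frobNorm (M' - X) := by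
  have hnpos : (0:ℝ) < n := by exact_mod_cast Nat.lt_of_lt_of_le Nat.zero_lt_one hn
  have hn0 : (n:ℝ) ≠ 0 := ne_of_gt hnpos
  set r : Fin n → ℝ := fun i => ∑ k, X i k with hr
  set c : Fin n → ℝ := fun j => ∑ k, X k j with hc
  set s : ℝ := ∑ i, ∑ j, X i j with hs
  have hcsum : ∑ j, c j = s := by rw [hs, hc]; exact Finset.sum_comm
  have hrsum : ∑ i, r i = s := rfl
  have hMij : ∀ i j, M i j = X i j + (1/(n:ℝ)) * (1 - r i - c j) + (1/(n:ℝ)^2) * s := by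
    intro i j
    have h1 : (X * J) i j = r i := by simp [Matrix.mul_apply, hJ, hr]
    have h2 : (J * X) i j = c j := by simp [Matrix.mul_apply, hJ, hc]
    have h3 : (J * X * J) i j = s := by
      have h2' : ∀ k, (J * X) i k = c k := by
        intro k; simp [Matrix.mul_apply, hJ, hc]
      rw [Matrix.mul_apply]
      simp only [hJ, mul_one, h2']
      exact hcsum
    rw [hM]
    simp only [Matrix.add_apply, Matrix.smul_apply, Matrix.sub_apply, h1, h2, h3, hJ,
      smul_eq_mul]
    try ring
  have hrow : ∀ i, ∑ j, M i j = 1 := by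
    intro i
    have hsum1 : ∑ j, (1 - r i - c j) = (n:ℝ) * (1 - r i) - s := by
      have : ∑ j, (1 - r i - c j) = ∑ j, ((1 - r i) - c j) := rfl
      rw [this, Finset.sum_sub_distrib, Finset.sum_const, Finset.card_fin, hcsum, nsmul_eq_mul]
    simp only [hMij]
    rw [Finset.sum_add_distrib, Finset.sum_add_distrib, Finset.sum_const, Finset.card_fin,
      nsmul_eq_mul, ← Finset.mul_sum, hsum1]
    field_simp; ring
  have hcol : ∀ j, ∑ i, M i j = 1 := by
    intro j
    have hsum1 : ∑ i, (1 - r i - c j) = (n:ℝ) * (1 - c j) - s := by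
      have : ∑ i, (1 - r i - c j) = ∑ i, ((1 - c j) - r i) := by
        congr 1; funext i; ring
      rw [this, Finset.sum_sub_distrib, Finset.sum_const, Finset.card_fin, hrsum, nsmul_eq_mul]
    simp only [hMij]
    rw [Finset.sum_add_distrib, Finset.sum_add_distrib, Finset.sum_const, Finset.card_fin,
      nsmul_eq_mul, ← Finset.mul_sum, hsum1]
    field_simp; ring
  have hMv : M.mulVec 1 = 1 := by
    funext i
    simp [Matrix.mulVec, dotProduct, hrow i]
  have hMtv : Mᵀ.mulVec 1 = 1 := by
    funext j
    simp [Matrix.mulVec, dotProduct, Matrix.transpose_apply, hcol j]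
  refine ⟨hMv, hMtv, ?_⟩
  intro M' h1 h2
  have hrow' : ∀ i, ∑ j, M' i j = 1 := by
    intro i
    have := congrFun h1 i
    simpa [Matrix.mulVec, dotProduct] using this
  have hcol' : ∀ j, ∑ i, M' i j = 1 := by
    intro j
    have := congrFun h2 j
    simpa [Matrix.mulVec, dotProduct, Matrix.transpose_apply] using this
  set a : Fin n → ℝ := fun i => 1/(n:ℝ) - r i/(n:ℝ) + s/(n:ℝ)^2 with ha
  set b : Fin n → ℝ := fun j => - c j/(n:ℝ) with hb
  have hD : ∀ i j, M i j - X i j = a i + b j := by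
    intro i j; rw [hMij]; simp [ha, hb]; ring
  set E : Fin n → Fin n → ℝ := fun i j => M' i j - M i j with hE
  have hErow : ∀ i, ∑ j, E i j = 0 := by
    intro i; simp [hE, Finset.sum_sub_distrib, hrow i, hrow' i]
  have hEcol : ∀ j, ∑ i, E i j = 0 := by
    intro j; simp [hE, Finset.sum_sub_distrib, hcol j, hcol' j]
  have hcross : ∑ i, ∑ j, (a i + b j) * E i j = 0 := by
    have h1 : ∑ i, ∑ j, a i * E i j = 0 := by
      simp only [← Finset.mul_sum]
      simp [hErow]
    have h2 : ∑ i, ∑ j, b j * E i j = 0 := by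
      rw [Finset.sum_comm]
      simp only [← Finset.mul_sum]
      simp [hEcol]
    calc ∑ i, ∑ j, (a i + b j) * E i j
        = ∑ i, ∑ j, (a i * E i j + b j * E i j) := by
          congr 1; funext i; congr 1; funext j; ring
      _ = (∑ i, ∑ j, a i * E i j) + ∑ i, ∑ j, b j * E i j := by
          rw [← Finset.sum_add_distrib]; congr 1; funext i; rw [Finset.sum_add_distrib]
      _ = 0 := by rw [h1, h2]; ring
  have hkey : ∑ i, ∑ j, (M i j - X i j)^2 ≤ ∑ i, ∑ j, (M' i j - X i j)^2 := by
    have hexp : ∀ i j, (M' i j - X i j)^2 = (M i j - X i j)^2 + 2 * ((a i + b j) * E i j) + (E i j)^2 := by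
      intro i j
      have : M' i j - X i j = (M i j - X i j) + E i j := by simp only [hE]; ring
      rw [this, hD i j]; ring
    have : ∑ i, ∑ j, (M' i j - X i j)^2
        = (∑ i, ∑ j, (M i j - X i j)^2) + 2 * (∑ i, ∑ j, (a i + b j) * E i j)
          + ∑ i, ∑ j, (E i j)^2 := by
      simp only [hexp, Finset.sum_add_distrib, Finset.mul_sum]
    rw [this, hcross]
    have : (0:ℝ) ≤ ∑ i, ∑ j, (E i j)^2 := by positivity
    linarith
  unfold frobNorm
  apply Real.sqrt_le_sqrt
  simpa [Matrix.sub_apply] using hkey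
end
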